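/- Let K be a field, S = K[x_1, ..., x_n] with n ≥ 2, and I ⊆ S a squarefree monomial ideal. For k ∈ {0, 1} let I_k ⊆ S' = K[x_1, ..., x_{n-1}] be the monomial ideal with I ∩ x_n^k S' = x_n^k I_k, and let I_k^c be the K-span of the monomials of S' not in I_k. Suppose I_0 = 0 (so I_0^c = S'), and I_1^c = ⊕_{j=1}^{r} v_j K[W_j] is a squarefree Stanley decomposition with W_j ⊆ {x_1, ..., x_{n-1}}. Then I^c = S' ⊕ (⊕_{j=1}^{r} v_j x_n K[W_j ∪ {x_n}]) is a squarefree Stanley decomposition of I^c. -/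

import Mathlib

/-!
Every subspace in sight is spanned by the monomials whose exponents lie in some set, so
independence of such subspaces is pairwise disjointness of the exponent sets and their sum is
the span of the union. Write an exponent of `S` as `(d, k)`, `k` the exponent of `x_n`. For
`k = 0` the monomial is not in `I` because `I_0 = 0`; for `k ≥ 1` it lies in `I` iff `x^d x_n`
does, since `I` is squarefree, i.e. iff `x^d ∈ I_1`. Hence the exponents outside `I` are those
with `k = 0`, spanning `S'`, and those with `k ≥ 1` and `x^d ∉ I_1`, which the decomposition of
`I_1^c` splits disjointly into the exponent sets of the `v_j x_n K[W_j ∪ {x_n}]`.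
-/

open MvPolynomial

/-- The Stanley space `u K[Z]`: the `K`-span of all monomials `u * v` where `v` is a
monomial in the variables of `Z`; the monomial `u` is given by its exponent vector `d`. -/
noncomputable def stanleySpace (K : Type*) [Field K] {σ : Type*} (d : σ →₀ ℕ)
    (Z : Finset σ) : Submodule K (MvPolynomial σ K) :=
  Submodule.span K
    {m | ∃ e : σ →₀ ℕ, (e.support : Set σ) ⊆ (Z : Set σ) ∧ m = monomial (d + e) (1 : K)}

/-- A monomial ideal: an ideal generated by monomials. -/
def IsMonomialIdeal {K : Type*} [Field K] {σ : Type*}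
    (I : Ideal (MvPolynomial σ K)) : Prop :=
  ∃ G : Set (σ →₀ ℕ), I = Ideal.span ((fun d => monomial d (1 : K)) '' G)

/-- A squarefree monomial ideal: an ideal generated by squarefree monomials. -/
def IsSquarefreeMonomialIdeal {K : Type*} [Field K] {σ : Type*}
    (I : Ideal (MvPolynomial σ K)) : Prop :=
  ∃ G : Set (σ →₀ ℕ), (∀ d ∈ G, ∀ i, d i ≤ 1) ∧
    I = Ideal.span ((fun d => monomial d (1 : K)) '' G)

/-- `I^c`: the `K`-span of all monomials not belonging to `I`. -/
noncomputable def compSpan (K : Type*) [Field K] {σ : Type*}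
    (I : Ideal (MvPolynomial σ K)) : Submodule K (MvPolynomial σ K) :=
  Submodule.span K
    {m | ∃ d : σ →₀ ℕ, monomial d (1 : K) ∉ I ∧ m = monomial d (1 : K)}

/-- `x_n^k V ⊆ S`: the image in `S = K[x_1,…,x_n]` of a `K`-subspace
`V ⊆ S' = K[x_1,…,x_{n-1}]` under inclusion followed by multiplication by `x_n^k`. -/
noncomputable def shiftUp (K : Type*) [Field K] (n : ℕ) (k : ℕ)
    (V : Submodule K (MvPolynomial (Fin n) K)) :
    Submodule K (MvPolynomial (Fin (n + 1)) K) :=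
  (V.map (rename (Fin.castSucc : Fin n → Fin (n + 1)) :
      MvPolynomial (Fin n) K →ₐ[K] MvPolynomial (Fin (n + 1)) K).toLinearMap).map
    (LinearMap.mulLeft K ((X (Fin.last n) : MvPolynomial (Fin (n + 1)) K) ^ k))

/-- The exponent vector of `u · x_{n+1}^k`, where `u` is a monomial of
`S' = K[x_1,…,x_n]` with exponent vector `d`. -/
noncomputable def shiftExp (n : ℕ) (k : ℕ) (d : Fin n →₀ ℕ) : Fin (n + 1) →₀ ℕ :=
  Finsupp.mapDomain (Fin.castSucc : Fin n → Fin (n + 1)) d + Finsupp.single (Fin.last n) k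

open Function

section RestrictSupport

variable {R : Type*} [CommSemiring R] {σ : Type*}

theorem iSup_restrictSupport {ι : Sort*} (s : ι → Set (σ →₀ ℕ)) :
    ⨆ i, restrictSupport R (s i) = restrictSupport R (⋃ i, s i) := by
  simp only [restrictSupport_eq_span, Set.image_iUnion, Submodule.span_iUnion]

variable [Nontrivial R]

theorem restrictSupport_injective :
    Injective (restrictSupport R : Set (σ →₀ ℕ) → Submodule R (MvPolynomial σ R)) := by
  intro s t h
  ext d
  simpa [monomial_mem_restrictSupport] using congrArg (monomial d (1 : R) ∈ ·) h

theorem disjoint_restrictSupport_iff {s t : Set (σ →₀ ℕ)} :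
    Disjoint (restrictSupport R s) (restrictSupport R t) ↔ Disjoint s t := by
  simp only [Submodule.disjoint_def, Set.disjoint_left]
  constructor
  · intro h d hs ht
    simpa using h (monomial d (1 : R)) (by simpa using hs) (by simpa using ht)
  · intro h p hs ht
    by_contra hp
    rw [mem_restrictSupport_iff] at hs ht
    obtain ⟨d, hd⟩ := (Finset.nonempty_of_ne_empty (mt support_eq_empty.mp hp))
    exact h (hs hd) (ht hd)

theorem iSupIndep_restrictSupport_iff {ι : Type*} {s : ι → Set (σ →₀ ℕ)} :
    iSupIndep (fun i => restrictSupport R (s i)) ↔ Pairwise (Disjoint on s) := by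
  rw [← iSupIndep_iff_pairwiseDisjoint]
  simp only [iSupIndep_def, iSup_restrictSupport, disjoint_restrictSupport_iff, Set.iSup_eq_iUnion]

end RestrictSupport

section StanleySpace

variable {K : Type*} [Field K] {σ : Type*}

def stanleyExponents (d : σ →₀ ℕ) (Z : Finset σ) : Set (σ →₀ ℕ) :=
  (d + ·) '' {e | (e.support : Set σ) ⊆ Z}

theorem mem_stanleyExponents {d f : σ →₀ ℕ} {Z : Finset σ} :
    f ∈ stanleyExponents d Z ↔ d ≤ f ∧ ∀ i ∉ Z, f i = d i := by
  constructor
  · rintro ⟨e, he, rfl⟩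
    refine ⟨le_self_add, fun i hi => ?_⟩
    simp [Finsupp.notMem_support_iff.mp (fun h => hi (he h))]
  · rintro ⟨hle, hZ⟩
    refine ⟨f - d, fun i hi => ?_, add_tsub_cancel_of_le hle⟩
    by_contra hiZ
    simp [hZ i hiZ] at hi

theorem stanleySpace_eq_restrictSupport (d : σ →₀ ℕ) (Z : Finset σ) :
    stanleySpace K d Z = restrictSupport K (stanleyExponents d Z) := by
  rw [stanleySpace, restrictSupport_eq_span, stanleyExponents, Set.image_image]
  congr 1
  ext m
  simp [eq_comm]

theorem compSpan_eq_restrictSupport (I : Ideal (MvPolynomial σ K)) :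
    compSpan K I = restrictSupport K {d | monomial d (1 : K) ∉ I} := by
  rw [compSpan, restrictSupport_eq_span]
  congr 1
  ext m
  simp [eq_comm]

end StanleySpace

noncomputable def Finsupp.init {n : ℕ} {M : Type*} [Zero M] (t : Fin (n + 1) →₀ M) : Fin n →₀ M :=
  Finsupp.equivFunOnFinite.symm (Fin.init t)

@[simp]
theorem Finsupp.init_apply {n : ℕ} {M : Type*} [Zero M] (t : Fin (n + 1) →₀ M) (i : Fin n) :
    t.init i = t i.castSucc :=
  rfl

section ShiftExp

open Fin

variable {n k : ℕ} {d : Fin n →₀ ℕ}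

@[simp]
theorem shiftExp_apply_castSucc (i : Fin n) : shiftExp n k d i.castSucc = d i := by
  simp [shiftExp, Finsupp.mapDomain_apply (castSucc_injective n), castSucc_ne_last]

@[simp]
theorem shiftExp_apply_last : shiftExp n k d (last n) = k := by
  simp [shiftExp, Finsupp.mapDomain_of_notMem_range]

@[simp]
theorem init_shiftExp : (shiftExp n k d).init = d := by
  ext i
  simp

theorem shiftExp_last_init (e : Fin (n + 1) →₀ ℕ) : shiftExp n (e (last n)) e.init = e := by
  ext i
  induction i using lastCases <;> simp

theorem shiftExp_apply_le_one (hd : ∀ l, d l ≤ 1) (hk : k ≤ 1) (l : Fin (n + 1)) :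
    shiftExp n k d l ≤ 1 := by
  induction l using lastCases <;> simp [hd, hk]

theorem support_shiftExp_subset :
    (shiftExp n k d).support ⊆ insert (last n) (d.support.image castSucc) := by
  intro i hi
  induction i using lastCases <;> simp_all

theorem support_shiftExp_eq_of_ne_zero {l : ℕ} (hk : k ≠ 0) (hl : l ≠ 0) :
    (shiftExp n k d).support = (shiftExp n l d).support := by
  ext i
  induction i using lastCases <;> simp [hk, hl]

theorem stanleyExponents_zero_image_castSucc :
    stanleyExponents (0 : Fin (n + 1) →₀ ℕ) (Finset.univ.image castSucc) =
      {e | e (last n) = 0} := by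
  ext e
  simp [mem_stanleyExponents]

theorem stanleyExponents_shiftExp (Z : Finset (Fin n)) :
    stanleyExponents (shiftExp n k d) (insert (last n) (Z.image castSucc)) =
      {e | k ≤ e (last n) ∧ e.init ∈ stanleyExponents d Z} := by
  ext e
  simp [mem_stanleyExponents, Finsupp.le_def, forall_fin_succ', castSucc_ne_last, and_assoc,
    and_comm]

end ShiftExp

theorem Finsupp.le_iff_support_subset_of_le_one {σ : Type*} {s e : σ →₀ ℕ}
    (hs : ∀ i, s i ≤ 1) : s ≤ e ↔ s.support ⊆ e.support := by
  refine ⟨Finsupp.support_mono, fun h i => ?_⟩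
  by_cases hi : s i = 0
  · simp [hi]
  · have := Finsupp.mem_support_iff.mp (h (Finsupp.mem_support_iff.mpr hi))
    have := hs i
    omega

theorem IsSquarefreeMonomialIdeal.monomial_mem_iff_of_support_eq {K : Type*} [Field K]
    {σ : Type*} {I : Ideal (MvPolynomial σ K)} (hI : IsSquarefreeMonomialIdeal I)
    {e e' : σ →₀ ℕ} (h : e.support = e'.support) :
    monomial e (1 : K) ∈ I ↔ monomial e' (1 : K) ∈ I := by
  classical
  obtain ⟨G, hG, rfl⟩ := hI
  simp only [mem_ideal_span_monomial_image, support_monomial, if_neg one_ne_zero,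
    Finset.mem_singleton, forall_eq]
  refine exists_congr fun s => and_congr_right fun hs => ?_
  rw [Finsupp.le_iff_support_subset_of_le_one (hG s hs),
    Finsupp.le_iff_support_subset_of_le_one (hG s hs), h]

section Slices

open Fin

variable {K : Type*} [Field K] {n k : ℕ}

theorem monomial_shiftExp_mem_shiftUp_iff {V : Submodule K (MvPolynomial (Fin n) K)}
    {d : Fin n →₀ ℕ} :
    monomial (shiftExp n k d) (1 : K) ∈ shiftUp K n k V ↔ monomial d (1 : K) ∈ V := by
  set f := LinearMap.mulLeft K ((X (last n) : MvPolynomial (Fin (n + 1)) K) ^ k) ∘ₗ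
    (rename castSucc : MvPolynomial (Fin n) K →ₐ[K] MvPolynomial (Fin (n + 1)) K).toLinearMap
  have hf : Function.Injective f :=
    (mul_right_injective₀ (pow_ne_zero k (X_ne_zero _))).comp
      (rename_injective _ (castSucc_injective n))
  have hmon : monomial (shiftExp n k d) (1 : K) = f (monomial d 1) := by
    simp [f, rename_monomial, X_pow_eq_monomial, monomial_mul, shiftExp, add_comm]
  rw [hmon, shiftUp, ← Submodule.map_comp, ← Submodule.mem_comap,
    Submodule.comap_map_eq_of_injective hf]

theorem monomial_shiftExp_mem_iff_of_inf_shiftUp_eq {I : Ideal (MvPolynomial (Fin (n + 1)) K)}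
    {J : Ideal (MvPolynomial (Fin n) K)}
    (h : I.restrictScalars K ⊓ shiftUp K n k ⊤ = shiftUp K n k (J.restrictScalars K))
    (d : Fin n →₀ ℕ) : monomial (shiftExp n k d) (1 : K) ∈ I ↔ monomial d (1 : K) ∈ J := by
  have hmem : monomial (shiftExp n k d) (1 : K) ∈ shiftUp K n k ⊤ :=
    monomial_shiftExp_mem_shiftUp_iff.mpr Submodule.mem_top
  calc monomial (shiftExp n k d) (1 : K) ∈ I
      ↔ monomial (shiftExp n k d) (1 : K) ∈ I.restrictScalars K ⊓ shiftUp K n k ⊤ :=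
        ⟨fun hI => ⟨hI, hmem⟩, And.left⟩
    _ ↔ monomial d (1 : K) ∈ J := by
        rw [h, monomial_shiftExp_mem_shiftUp_iff, Submodule.restrictScalars_mem]

theorem monomial_notMem_iff_of_slices {I : Ideal (MvPolynomial (Fin (n + 1)) K)}
    (hI : IsSquarefreeMonomialIdeal I) {I1 : Ideal (MvPolynomial (Fin n) K)}
    (hI0 : I.restrictScalars K ⊓ shiftUp K n 0 ⊤ = shiftUp K n 0
      (Submodule.restrictScalars K (⊥ : Ideal (MvPolynomial (Fin n) K))))
    (hI1 : I.restrictScalars K ⊓ shiftUp K n 1 ⊤ = shiftUp K n 1 (I1.restrictScalars K))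
    (e : Fin (n + 1) →₀ ℕ) :
    monomial e (1 : K) ∉ I ↔ e (last n) = 0 ∨ monomial e.init (1 : K) ∉ I1 := by
  rw [← shiftExp_last_init e]
  by_cases he : e (last n) = 0
  · simp [he, monomial_shiftExp_mem_iff_of_inf_shiftUp_eq hI0]
  · rw [hI.monomial_mem_iff_of_support_eq (support_shiftExp_eq_of_ne_zero he one_ne_zero),
      monomial_shiftExp_mem_iff_of_inf_shiftUp_eq hI1]
    simp [he]

end Slices

section LiftedExponents

open Fin

variable {n : ℕ} {ι : Type*}

def liftedExponents (E : ι → Set (Fin n →₀ ℕ)) : Unit ⊕ ι → Set (Fin (n + 1) →₀ ℕ) :=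
  Sum.elim (fun _ => {e | e (last n) = 0}) (fun j => {e | 1 ≤ e (last n) ∧ e.init ∈ E j})

theorem pairwise_disjoint_liftedExponents {E : ι → Set (Fin n →₀ ℕ)}
    (hE : Pairwise (Disjoint on E)) : Pairwise (Disjoint on liftedExponents E) := by
  rintro (⟨⟩ | i) (⟨⟩ | j) hij
  · exact absurd rfl hij
  all_goals
    simp only [onFun, liftedExponents, Sum.elim_inl, Sum.elim_inr, Set.disjoint_left,
      Set.mem_ofPred_eq]
  · omega
  · omega
  · exact fun e he he' => Set.disjoint_left.mp (hE (hij ∘ congrArg Sum.inr)) he.2 he'.2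

theorem iUnion_liftedExponents (E : ι → Set (Fin n →₀ ℕ)) :
    ⋃ x, liftedExponents E x = {e | e (last n) = 0 ∨ e.init ∈ ⋃ j, E j} := by
  ext e
  simp only [Set.mem_iUnion, Sum.exists, liftedExponents, Sum.elim_inl, Sum.elim_inr,
    Set.mem_ofPred_eq, exists_const]
  by_cases h : e (last n) = 0 <;> simp [h, Nat.one_le_iff_ne_zero]

theorem restrictSupport_liftedExponents (K : Type*) [Field K] (v : ι → Fin n →₀ ℕ)
    (W : ι → Finset (Fin n)) (x : Unit ⊕ ι) :
    restrictSupport K (liftedExponents (fun j => stanleyExponents (v j) (W j)) x) =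
      Sum.elim
        (fun _ : Unit => stanleySpace K (0 : Fin (n + 1) →₀ ℕ) (Finset.univ.image castSucc))
        (fun j => stanleySpace K (shiftExp n 1 (v j)) (insert (last n) ((W j).image castSucc)))
        x := by
  cases x <;>
    simp only [liftedExponents, Sum.elim_inl, Sum.elim_inr, stanleySpace_eq_restrictSupport,
      stanleyExponents_zero_image_castSucc, stanleyExponents_shiftExp]

end LiftedExponents

theorem janet_comp_squarefree_decomposition_case_alpha_beta_one_general
    (K : Type*) [Field K] (n : ℕ)
    (I : Ideal (MvPolynomial (Fin (n + 1)) K)) (hI : IsSquarefreeMonomialIdeal I)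
    (I0 I1 : Ideal (MvPolynomial (Fin n) K))
    (hI0 : Submodule.restrictScalars K I ⊓ shiftUp K n 0 ⊤ =
      shiftUp K n 0 (Submodule.restrictScalars K I0))
    (hI1 : Submodule.restrictScalars K I ⊓ shiftUp K n 1 ⊤ =
      shiftUp K n 1 (Submodule.restrictScalars K I1))
    (h0 : I0 = ⊥)
    (r : ℕ) (v : Fin r → (Fin n →₀ ℕ)) (W : Fin r → Finset (Fin n))
    (hv : ∀ j, (∀ l, v j l ≤ 1) ∧ (v j).support ⊆ W j)
    (hdec1 : iSupIndep (fun j => stanleySpace K (v j) (W j)) ∧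
      (⨆ j, stanleySpace K (v j) (W j)) = compSpan K I1) :
    (∀ j : Fin r, (∀ l, shiftExp n 1 (v j) l ≤ 1) ∧
      (shiftExp n 1 (v j)).support ⊆ insert (Fin.last n) ((W j).image Fin.castSucc)) ∧
    iSupIndep (fun x : Unit ⊕ Fin r =>
      Sum.elim
        (fun _ : Unit => stanleySpace K (0 : Fin (n + 1) →₀ ℕ)
          ((Finset.univ : Finset (Fin n)).image Fin.castSucc))
        (fun j => stanleySpace K (shiftExp n 1 (v j))
          (insert (Fin.last n) ((W j).image Fin.castSucc))) x) ∧
    (⨆ x : Unit ⊕ Fin r,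
      Sum.elim
        (fun _ : Unit => stanleySpace K (0 : Fin (n + 1) →₀ ℕ)
          ((Finset.univ : Finset (Fin n)).image Fin.castSucc))
        (fun j => stanleySpace K (shiftExp n 1 (v j))
          (insert (Fin.last n) ((W j).image Fin.castSucc))) x) = compSpan K I := by
  subst h0
  simp only [stanleySpace_eq_restrictSupport, compSpan_eq_restrictSupport,
    iSupIndep_restrictSupport_iff, iSup_restrictSupport] at hdec1
  obtain ⟨hE, hU⟩ := hdec1
  refine ⟨fun j => ⟨shiftExp_apply_le_one (hv j).1 le_rfl,
    support_shiftExp_subset.trans (by gcongr; exact (hv j).2)⟩, ?_, ?_⟩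
  · simp only [← restrictSupport_liftedExponents, iSupIndep_restrictSupport_iff]
    exact pairwise_disjoint_liftedExponents hE
  · simp only [← restrictSupport_liftedExponents, iSup_restrictSupport,
      iUnion_liftedExponents, restrictSupport_injective hU, compSpan_eq_restrictSupport]
    congr 1
    ext e
    exact (monomial_notMem_iff_of_slices hI hI0 hI1 e).symm

/-- (Here `S = K[x_1,…,x_{n+1}]`, `S' = K[x_1,…,x_n]`, `n ≥ 1`.) Let
`I ⊆ S` be a squarefree monomial ideal with slices `I_0 = 0`, `I_1` (determined by
`I ∩ x_{n+1}^k S' = x_{n+1}^k I_k`), so `I_0^c = S'`. Given a squarefree Stanley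
decomposition `I_1^c = ⊕_j v_j K[W_j]`, the decomposition
`I^c = S' ⊕ (⊕_j v_j x_{n+1} K[W_j ∪ {x_{n+1}}])` is a squarefree Stanley decomposition
of `I^c`. Here `S' ⊆ S` is the squarefree Stanley space `1·K[{x_1,…,x_n}]`. -/
theorem janet_comp_squarefree_decomposition_case_alpha_beta_one
    (K : Type*) [Field K] (n : ℕ) (hn : 1 ≤ n)
    (I : Ideal (MvPolynomial (Fin (n + 1)) K)) (hI : IsSquarefreeMonomialIdeal I)
    (I0 I1 : Ideal (MvPolynomial (Fin n) K))
    (hI0 : Submodule.restrictScalars K I ⊓ shiftUp K n 0 ⊤ =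
      shiftUp K n 0 (Submodule.restrictScalars K I0))
    (hI1 : Submodule.restrictScalars K I ⊓ shiftUp K n 1 ⊤ =
      shiftUp K n 1 (Submodule.restrictScalars K I1))
    (h0 : I0 = ⊥)
    (r : ℕ) (v : Fin r → (Fin n →₀ ℕ)) (W : Fin r → Finset (Fin n))
    (hv : ∀ j, (∀ l, v j l ≤ 1) ∧ (v j).support ⊆ W j)
    (hdec1 : iSupIndep (fun j => stanleySpace K (v j) (W j)) ∧
      (⨆ j, stanleySpace K (v j) (W j)) = compSpan K I1) :
    (∀ j : Fin r, (∀ l, shiftExp n 1 (v j) l ≤ 1) ∧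
      (shiftExp n 1 (v j)).support ⊆ insert (Fin.last n) ((W j).image Fin.castSucc)) ∧
    iSupIndep (fun x : Unit ⊕ Fin r =>
      Sum.elim
        (fun _ : Unit => stanleySpace K (0 : Fin (n + 1) →₀ ℕ)
          ((Finset.univ : Finset (Fin n)).image Fin.castSucc))
        (fun j => stanleySpace K (shiftExp n 1 (v j))
          (insert (Fin.last n) ((W j).image Fin.castSucc))) x) ∧
    (⨆ x : Unit ⊕ Fin r,
      Sum.elim
        (fun _ : Unit => stanleySpace K (0 : Fin (n + 1) →₀ ℕ)
          ((Finset.univ : Finset (Fin n)).image Fin.castSucc))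
        (fun j => stanleySpace K (shiftExp n 1 (v j))
          (insert (Fin.last n) ((W j).image Fin.castSucc))) x) = compSpan K I :=
  janet_comp_squarefree_decomposition_case_alpha_beta_one_general K n I hI I0 I1 hI0 hI1 h0 r v W hv
    hdec1
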